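/- For every nonnegative integer k and every integer r ≥ 1 there exist polynomials P_{k,0}(q), …, P_{k,rk}(q) with integer coefficients such that, in ℚ(q), for all nonnegative integers n: ([n+k,k])^r = Σ_{j=0}^{r·k} q^{(r·k-j)·n}·P_{k,j}(q)·[n+j,j]. -/

import Mathlib

/-- The $q$-factorial `(q)_n = (1-q)(1-q²)⋯(1-qⁿ)` in `ℚ(q) = RatFunc ℚ`. -/
noncomputable def qfac (n : ℕ) : RatFunc ℚ :=
  ∏ m ∈ Finset.range n, (1 - (RatFunc.X : RatFunc ℚ) ^ (m + 1))

/-- The Gaussian binomial coefficient `[n, k]` in `ℚ(q)`. -/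
noncomputable def qbinom (n k : ℕ) : RatFunc ℚ :=
  if k ≤ n then qfac n / (qfac k * qfac (n - k)) else 0

/-- The $q$-multinomial coefficient `Mq(j; i, k)` in `ℚ(q)`: it equals
`(q)_j/((q)_{j-i}(q)_{j-k}(q)_{i+k-j})` when `max i k ≤ j ≤ i + k`, and `0`
otherwise. -/
noncomputable def qmulti (j i k : ℕ) : RatFunc ℚ :=
  if i ≤ j ∧ k ≤ j ∧ j ≤ i + k then
    qfac j / (qfac (j - i) * qfac (j - k) * qfac (i + k - j))
  else 0

/-!
The functions `n ↦ q^{(m-j)n} [n+j, j]`, `j ≤ m`, span a `ℤ[q]`-module `V_m`, and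
multiplication by `[n+k, k]` maps `V_a` into `V_{a+k}` by the linearization formula
`[n+i, i] [n+k, k] = ∑_{d ≤ i} (-1)^d q^{d(d+1)/2} [i+k-d, i] [i, d] q^{dn} [n+i+k-d, i+k-d]`,
which follows by induction on `k` from `(1 - q^{k+1}) [n+k+1, k+1] = (1 - q^{n+k+1}) [n+k, k]`.
Hence `[n+k, k]^r ∈ V_{rk}` by induction on `r`.
-/

open Finset

local notation "q" => (RatFunc.X : RatFunc ℚ)

lemma one_sub_X_pow_succ_ne_zero (m : ℕ) : 1 - q ^ (m + 1) ≠ 0 := by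
  rw [sub_ne_zero, ne_comm]
  intro h
  have := congrArg RatFunc.intDegree h
  rw [← RatFunc.algebraMap_X, ← map_pow, RatFunc.intDegree_polynomial] at this
  simp at this
  omega

lemma qfac_succ (n : ℕ) : qfac (n + 1) = qfac n * (1 - q ^ (n + 1)) :=
  prod_range_succ _ _

lemma qfac_ne_zero (n : ℕ) : qfac n ≠ 0 :=
  prod_ne_zero_iff.mpr fun m _ => one_sub_X_pow_succ_ne_zero m

lemma qfac_zero : qfac 0 = 1 := prod_range_zero _

lemma qbinom_of_lt {n k : ℕ} (h : n < k) : qbinom n k = 0 := if_neg (by omega)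

lemma qbinom_zero_right (n : ℕ) : qbinom n 0 = 1 := by
  rw [qbinom, if_pos n.zero_le, Nat.sub_zero, qfac_zero, one_mul, div_self (qfac_ne_zero n)]

lemma qbinom_self (n : ℕ) : qbinom n n = 1 := by
  rw [qbinom, if_pos le_rfl, Nat.sub_self, qfac_zero, mul_one, div_self (qfac_ne_zero n)]

lemma one_sub_X_pow_mul_qbinom_succ_succ (n k : ℕ) :
    (1 - q ^ (k + 1)) * qbinom (n + 1) (k + 1) = (1 - q ^ (n + 1)) * qbinom n k := by
  rcases lt_or_ge n k with h | h
  · rw [qbinom_of_lt h, qbinom_of_lt (by omega), mul_zero, mul_zero]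
  · rw [qbinom, if_pos (by omega), qbinom, if_pos h, Nat.add_sub_add_right, qfac_succ, qfac_succ]
    have := qfac_ne_zero k
    have := qfac_ne_zero (n - k)
    have := one_sub_X_pow_succ_ne_zero k
    field_simp

lemma one_sub_X_pow_mul_qbinom_succ_right (n k : ℕ) :
    (1 - q ^ (k + 1)) * qbinom n (k + 1) = (1 - q ^ (n - k)) * qbinom n k := by
  rcases le_or_gt n k with h | h
  · rw [qbinom_of_lt (by omega), Nat.sub_eq_zero_of_le h]
    ring
  · obtain ⟨l, hl⟩ : ∃ l, n - k = l + 1 := ⟨n - k - 1, by omega⟩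
    rw [qbinom, if_pos (show k + 1 ≤ n by omega), qbinom, if_pos h.le, hl,
      show n - (k + 1) = l by omega, qfac_succ, qfac_succ]
    have := qfac_ne_zero k
    have := qfac_ne_zero l
    have := one_sub_X_pow_succ_ne_zero k
    have := one_sub_X_pow_succ_ne_zero l
    field_simp

lemma one_sub_X_pow_mul_qbinom_succ_left (n k : ℕ) :
    (1 - q ^ (n + 1)) * qbinom n k = (1 - q ^ (n + 1 - k)) * qbinom (n + 1) k := by
  rw [← one_sub_X_pow_mul_qbinom_succ_succ, one_sub_X_pow_mul_qbinom_succ_right]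

lemma qbinom_succ_succ (n k : ℕ) :
    qbinom (n + 1) (k + 1) = q ^ (k + 1) * qbinom n (k + 1) + qbinom n k := by
  apply mul_left_cancel₀ (one_sub_X_pow_succ_ne_zero k)
  rw [one_sub_X_pow_mul_qbinom_succ_succ, mul_add, mul_left_comm,
    one_sub_X_pow_mul_qbinom_succ_right]
  rcases le_or_gt k n with h | h
  · rw [show q ^ (n + 1) = q ^ (k + 1) * q ^ (n - k) by rw [← pow_add]; congr 1; omega]
    ring
  · rw [qbinom_of_lt h]
    ring

noncomputable abbrev intPolyRange : Subalgebra ℤ (RatFunc ℚ) := (Polynomial.aeval q).range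

lemma X_mem_intPolyRange : q ∈ intPolyRange := ⟨Polynomial.X, Polynomial.aeval_X q⟩

lemma qbinom_mem_intPolyRange (n k : ℕ) : qbinom n k ∈ intPolyRange := by
  induction n generalizing k with
  | zero => rcases k with _ | k <;> simp [qbinom_zero_right, qbinom_of_lt]
  | succ n ih =>
    rcases k with _ | k
    · simp [qbinom_zero_right]
    · rw [qbinom_succ_succ]
      exact add_mem (mul_mem (pow_mem X_mem_intPolyRange _) (ih _)) (ih _)

/-- `(-1)^d q^{d(d+1)/2} Mq(i+k-d; i, k)`, written as a product of Gaussian binomials so that it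
vanishes unless `d ≤ min i k`. -/
noncomputable def bilinCoeff (i k d : ℕ) : RatFunc ℚ :=
  (-1) ^ d * q ^ (d + 1).choose 2 * qbinom (i + k - d) i * qbinom i d

lemma bilinCoeff_mem_intPolyRange (i k d : ℕ) : bilinCoeff i k d ∈ intPolyRange :=
  mul_mem (mul_mem (mul_mem (pow_mem (neg_mem (one_mem _)) _) (pow_mem X_mem_intPolyRange _))
    (qbinom_mem_intPolyRange _ _)) (qbinom_mem_intPolyRange _ _)

lemma bilinCoeff_zero_right (i k : ℕ) : bilinCoeff i k 0 = qbinom (i + k) i := by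
  simp [bilinCoeff, qbinom_zero_right]

lemma bilinCoeff_succ_rec {i e : ℕ} (k : ℕ) (he : e < i) :
    (1 - q ^ (k + 1)) * bilinCoeff i (k + 1) (e + 1) =
      (1 - q ^ (i + k - e)) * bilinCoeff i k (e + 1) +
        (q ^ (i + k + 1 - e) - q ^ (k + 1)) * bilinCoeff i k e := by
  rcases lt_or_ge k e with hk | hk
  · simp only [bilinCoeff, qbinom_of_lt (show i + (k + 1) - (e + 1) < i by omega),
      qbinom_of_lt (show i + k - (e + 1) < i by omega), qbinom_of_lt (show i + k - e < i by omega)]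
    ring
  have hsucc := one_sub_X_pow_mul_qbinom_succ_right i e
  have hleft := one_sub_X_pow_mul_qbinom_succ_left (i + k - (e + 1)) i
  rw [show i + k - (e + 1) + 1 = i + k - e by omega, show i + k - e - i = k - e by omega] at hleft
  have hchoose : q ^ (e + 1 + 1).choose 2 = q ^ (e + 1).choose 2 * q ^ (e + 1) := by
    rw [← pow_add, Nat.choose_succ_succ' (e + 1), Nat.choose_one_right, add_comm]
  rw [show q ^ (k + 1) = q ^ (k - e) * q ^ (e + 1) by rw [← pow_add]; congr 1; omega,
    show q ^ (i + k + 1 - e) = q ^ (k - e) * q ^ (e + 1) * q ^ (i - e) by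
      rw [← pow_add, ← pow_add]; congr 1; omega]
  simp only [bilinCoeff, show i + (k + 1) - (e + 1) = i + k - e by omega, hchoose]
  linear_combination (-1) ^ e * q ^ (e + 1).choose 2 * q ^ (e + 1) *
    (qbinom i (e + 1) * hleft - q ^ (k - e) * qbinom (i + k - e) i * hsucc)

lemma one_sub_X_pow_mul_qbinom_add (n m k : ℕ) :
    (1 - q ^ (n + k + 1)) * qbinom (n + m) m =
      (1 - q ^ (m + 1)) * qbinom (n + m + 1) (m + 1) +
        q ^ n * (q ^ (m + 1) - q ^ (k + 1)) * qbinom (n + m) m := by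
  rw [one_sub_X_pow_mul_qbinom_succ_succ]
  ring

theorem qbinom_mul_qbinom (i k n : ℕ) :
    qbinom (n + i) i * qbinom (n + k) k =
      ∑ d ∈ range (i + 1),
        q ^ (d * n) * bilinCoeff i k d * qbinom (n + (i + k - d)) (i + k - d) := by
  induction k with
  | zero =>
    rw [sum_range_succ', sum_eq_zero fun d hd => by
      rw [bilinCoeff, qbinom_of_lt (show i + 0 - (d + 1) < i by grind)]; ring]
    simp [bilinCoeff_zero_right, qbinom_zero_right, qbinom_self]
  | succ k ih =>
    apply mul_left_cancel₀ (one_sub_X_pow_succ_ne_zero k)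
    calc (1 - q ^ (k + 1)) * (qbinom (n + i) i * qbinom (n + (k + 1)) (k + 1))
        = ∑ d ∈ range (i + 1), q ^ (d * n) * bilinCoeff i k d *
            ((1 - q ^ (n + k + 1)) * qbinom (n + (i + k - d)) (i + k - d)) := by
          rw [mul_left_comm, ← add_assoc, one_sub_X_pow_mul_qbinom_succ_succ, mul_left_comm, ih,
            mul_sum]
          exact sum_congr rfl fun d _ => by ring
      _ = ∑ d ∈ range (i + 1),
            (q ^ (d * n) * bilinCoeff i k d * (1 - q ^ (i + k - d + 1)) *
                qbinom (n + (i + k - d) + 1) (i + k - d + 1) +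
              q ^ ((d + 1) * n) * (q ^ (i + k - d + 1) - q ^ (k + 1)) * bilinCoeff i k d *
                qbinom (n + (i + k - d)) (i + k - d)) :=
          sum_congr rfl fun d _ => by rw [one_sub_X_pow_mul_qbinom_add]; ring
      _ = (1 - q ^ (k + 1)) * ∑ d ∈ range (i + 1),
            q ^ (d * n) * bilinCoeff i (k + 1) d *
              qbinom (n + (i + (k + 1) - d)) (i + (k + 1) - d) := by
          -- the last term of the second sum vanishes; realign it with the first by `d ↦ d + 1`
          rw [sum_add_distrib, sum_range_succ', sum_range_succ _ i, mul_sum, sum_range_succ']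
          simp only [Nat.add_sub_cancel_left, sub_self, mul_zero, zero_mul, add_zero]
          rw [add_right_comm, ← sum_add_distrib]
          congr 1
          · refine sum_congr rfl fun e he => ?_
            have he : e < i := mem_range.mp he
            rw [show n + (i + k - (e + 1)) + 1 = n + (i + k - e) by omega,
              show i + k - (e + 1) + 1 = i + k - e by omega,
              show i + (k + 1) - (e + 1) = i + k - e by omega,
              show i + k - e + 1 = i + k + 1 - e by omega]
            linear_combination -q ^ ((e + 1) * n) * qbinom (n + (i + k - e)) (i + k - e) *
              bilinCoeff_succ_rec k he
          · have h := one_sub_X_pow_mul_qbinom_succ_left (i + k) i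
            rw [show i + k + 1 - i = k + 1 by omega] at h
            simp only [Nat.sub_zero, pow_zero, one_mul, bilinCoeff_zero_right, ← add_assoc]
            linear_combination qbinom (n + i + k + 1) (i + k + 1) * h

noncomputable def shiftedQbinom (m j : ℕ) : ℕ → RatFunc ℚ :=
  fun n => q ^ ((m - j) * n) * qbinom (n + j) j

noncomputable def expansionSpace (m : ℕ) : Submodule intPolyRange (ℕ → RatFunc ℚ) :=
  Submodule.span intPolyRange (Set.range fun j : Fin (m + 1) => shiftedQbinom m j)

lemma shiftedQbinom_mem_expansionSpace {m j : ℕ} (h : j ≤ m) :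
    shiftedQbinom m j ∈ expansionSpace m :=
  Submodule.subset_span ⟨⟨j, by omega⟩, rfl⟩

lemma shiftedQbinom_mul_qbinom (a j k : ℕ) (hj : j ≤ a) :
    (fun n => shiftedQbinom a j n * qbinom (n + k) k) =
      ∑ d ∈ range (j + 1),
        (⟨bilinCoeff j k d, bilinCoeff_mem_intPolyRange j k d⟩ : intPolyRange) •
          shiftedQbinom (a + k) (j + k - d) := by
  funext n
  rw [shiftedQbinom, mul_assoc, qbinom_mul_qbinom, mul_sum, Finset.sum_apply]
  refine sum_congr rfl fun d hd => ?_
  have hd : d ≤ j := Nat.lt_succ_iff.mp (mem_range.mp hd)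
  rw [Pi.smul_apply, Subalgebra.smul_def, smul_eq_mul, shiftedQbinom,
    show a + k - (j + k - d) = (a - j) + d by omega]
  ring

lemma mul_qbinom_mem_expansionSpace {a : ℕ} {F : ℕ → RatFunc ℚ}
    (hF : F ∈ expansionSpace a) (k : ℕ) :
    (fun n => F n * qbinom (n + k) k) ∈ expansionSpace (a + k) := by
  let mulB : (ℕ → RatFunc ℚ) →ₗ[intPolyRange] (ℕ → RatFunc ℚ) :=
    LinearMap.mulRight intPolyRange fun n => qbinom (n + k) k
  suffices expansionSpace a ≤ (expansionSpace (a + k)).comap mulB from this hF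
  refine Submodule.span_le.mpr ?_
  rintro _ ⟨j, rfl⟩
  change (fun n => shiftedQbinom a j n * qbinom (n + k) k) ∈ expansionSpace (a + k)
  rw [shiftedQbinom_mul_qbinom a j k (Nat.lt_succ_iff.mp j.2)]
  exact sum_mem fun d _ =>
    Submodule.smul_mem _ _ (shiftedQbinom_mem_expansionSpace (by omega))

lemma qbinom_pow_mem_expansionSpace (k r : ℕ) :
    (fun n => qbinom (n + k) k ^ r) ∈ expansionSpace (r * k) := by
  induction r with
  | zero =>
    rw [Nat.zero_mul]
    convert shiftedQbinom_mem_expansionSpace (le_refl 0) using 1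
    funext n
    simp [shiftedQbinom, qbinom_zero_right]
  | succ r ih =>
    simp only [pow_succ, Nat.succ_mul]
    exact mul_qbinom_mem_expansionSpace ih k

lemma exists_expansion_of_mem_expansionSpace {m : ℕ} {F : ℕ → RatFunc ℚ}
    (hF : F ∈ expansionSpace m) :
    ∃ P : ℕ → Polynomial ℤ, ∀ n : ℕ,
      F n = ∑ j ∈ range (m + 1),
        q ^ ((m - j) * n) * Polynomial.aeval q (P j) * qbinom (n + j) j := by
  obtain ⟨c, rfl⟩ := (Submodule.mem_span_range_iff_exists_fun intPolyRange).mp hF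
  choose lift hlift using fun x : intPolyRange => (AlgHom.mem_range _).mp x.2
  refine ⟨fun j => lift (c (Fin.ofNat (m + 1) j)), fun n => ?_⟩
  rw [← Fin.sum_univ_eq_sum_range, Finset.sum_apply]
  refine sum_congr rfl fun j _ => ?_
  dsimp only
  rw [Fin.ofNat_val_eq_self, hlift, Pi.smul_apply, Subalgebra.smul_def, smul_eq_mul, shiftedQbinom]
  ring

theorem stmt_15_general (k r : ℕ) :
    ∃ P : ℕ → Polynomial ℤ, ∀ n : ℕ,
      (qbinom (n + k) k) ^ r =
        ∑ j ∈ Finset.range (r * k + 1),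
          (RatFunc.X : RatFunc ℚ) ^ ((r * k - j) * n) *
            Polynomial.aeval (RatFunc.X : RatFunc ℚ) (P j) * qbinom (n + j) j :=
  exists_expansion_of_mem_expansionSpace (qbinom_pow_mem_expansionSpace k r)

/-- $q$-analog of Statement 8: the coefficients are `q^{(rk-j)n}` times
polynomials in `q` with integer coefficients. -/
theorem stmt_15 (k r : ℕ) (hr : 1 ≤ r) :
    ∃ P : ℕ → Polynomial ℤ, ∀ n : ℕ,
      (qbinom (n + k) k) ^ r =
        ∑ j ∈ Finset.range (r * k + 1),
          (RatFunc.X : RatFunc ℚ) ^ ((r * k - j) * n) *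
            Polynomial.aeval (RatFunc.X : RatFunc ℚ) (P j) * qbinom (n + j) j :=
  stmt_15_general k r
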